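/- Let G be a finite connected graph, and let P be a set of three longest paths of G. If there exists a path P ∈ P with t_P(P) = 1 (i.e., writing P \ {P} = {P₁,P₂}, the path P contains exactly one V(P₁)-V(P₂) subpath), then f(G,P) = 0. -/

import Mathlib

/-! Let `q`, from `a` to `b`, be the unique `V(P₁)`-`V(P₂)` subpath of the longest path
`P = r q s`. Uniqueness means that `P` never runs from `V(P₂)` back to `V(P₁)`, so `r` avoids
`V(P₂)` and `s` avoids `V(P₁)`. Gluing `q s` to either half of `P₁` at `a` gives a path, so
`2 |q s| ≤ l(G)`; symmetrically `2 |r q| ≤ l(G)` using `P₂`. Adding, `|q| = 0`, so `a = b` lies on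
all three paths. -/

open SimpleGraph

noncomputable section

/-- The maximum length (number of edges) of a path in `G`. -/
def maxPathLength {V : Type} (G : SimpleGraph V) : ℕ :=
  sSup {n : ℕ | ∃ (a b : V) (q : G.Walk a b), q.IsPath ∧ q.length = n}

/-- `p` is a longest path of `G`: a path whose length equals `maxPathLength G`. -/
def IsLongestPath {V : Type} (G : SimpleGraph V) {u v : V} (p : G.Walk u v) : Prop :=
  p.IsPath ∧ p.length = maxPathLength G

/-- The vertex set of a walk. -/
def walkVerts {V : Type} {G : SimpleGraph V} {u v : V} (p : G.Walk u v) : Set V :=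
  {x | x ∈ p.support}

/-- The distance `d_G(v, U)` from a vertex `v` to a set `U` of vertices. -/
def distToSet {V : Type} (G : SimpleGraph V) (v : V) (U : Set V) : ℕ :=
  sInf (G.dist v '' U)

/-- A walk bundled together with its endpoints, used to compare paths with
different endpoints for (in)equality. -/
def pathSigma {V : Type} (G : SimpleGraph V) {u v : V} (p : G.Walk u v) :
    Σ a : V, Σ b : V, G.Walk a b := ⟨u, v, p⟩

/-- `f(G, {P₁, P₂}) = min_{v ∈ V(G)} (d_G(v, V(P₁)) + d_G(v, V(P₂)))`. -/
def fTwo {V : Type} (G : SimpleGraph V) {u₁ v₁ u₂ v₂ : V}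
    (p₁ : G.Walk u₁ v₁) (p₂ : G.Walk u₂ v₂) : ℕ :=
  sInf (Set.range fun v : V => distToSet G v (walkVerts p₁) + distToSet G v (walkVerts p₂))

/-- `f(G, {P₁, P₂, P₃}) = min_{v ∈ V(G)} Σᵢ d_G(v, V(Pᵢ))`. -/
def fThree {V : Type} (G : SimpleGraph V) {u₁ v₁ u₂ v₂ u₃ v₃ : V}
    (p₁ : G.Walk u₁ v₁) (p₂ : G.Walk u₂ v₂) (p₃ : G.Walk u₃ v₃) : ℕ :=
  sInf (Set.range fun v : V =>
    distToSet G v (walkVerts p₁) + distToSet G v (walkVerts p₂) + distToSet G v (walkVerts p₃))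

/-- `q` is a subpath of `p` (i.e. a path "on" `p`). -/
def IsSubpath {V : Type} (G : SimpleGraph V) {a b u v : V}
    (q : G.Walk a b) (p : G.Walk u v) : Prop :=
  ∃ (r : G.Walk u a) (s : G.Walk b v), p = r.append (q.append s)

/-- `q` is an `X`-`Y` path: a path meeting `X` exactly in its first end-vertex and
`Y` exactly in its last end-vertex. -/
def IsXYPath {V : Type} (G : SimpleGraph V) (X Y : Set V) {a b : V} (q : G.Walk a b) : Prop :=
  q.IsPath ∧ walkVerts q ∩ X = {a} ∧ walkVerts q ∩ Y = {b}

/-- `tCount G p X Y` is the number of `X`-`Y` paths that are subpaths of `p`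
(counted without regard to orientation). -/
def tCount {V : Type} (G : SimpleGraph V) {u v : V} (p : G.Walk u v) (X Y : Set V) : ℕ :=
  Nat.card {q : Σ a : V, Σ b : V, G.Walk a b //
    IsSubpath G q.2.2 p ∧ (IsXYPath G X Y q.2.2 ∨ IsXYPath G Y X q.2.2)}

namespace SimpleGraph.Walk

variable {V : Type} {G : SimpleGraph V}

lemma IsPath.append {u v w : V} {p : G.Walk u v} {q : G.Walk v w} (hp : p.IsPath) (hq : q.IsPath)
    (h : ∀ z ∈ p.support, z ∈ q.support → z = v) : (p.append q).IsPath := by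
  have hq' := hq.support_nodup
  rw [← cons_tail_support, List.nodup_cons] at hq'
  rw [isPath_def, support_append]
  refine hp.support_nodup.append hq'.2 fun z hzp hzq ↦ ?_
  obtain rfl := h z hzp (q.cons_tail_support ▸ List.mem_cons_of_mem _ hzq)
  exact hq'.1 hzq

lemma IsPath.length_le_maxPathLength [Finite V] {u v : V} {p : G.Walk u v} (hp : p.IsPath) :
    p.length ≤ maxPathLength G := by
  have := Fintype.ofFinite V
  refine le_csSup ⟨Fintype.card V, ?_⟩ ⟨u, v, p, hp, rfl⟩
  rintro n ⟨_, _, q, hq, rfl⟩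
  exact hq.length_lt.le

end SimpleGraph.Walk

open SimpleGraph.Walk

section

variable {V : Type} {G : SimpleGraph V}

lemma mem_walkVerts {u v x : V} {p : G.Walk u v} : x ∈ walkVerts p ↔ x ∈ p.support := Iff.rfl

lemma isSubpath_iff_isSubwalk {a b u v : V} {q : G.Walk a b} {p : G.Walk u v} :
    IsSubpath G q p ↔ q.IsSubwalk p := by
  simp only [IsSubpath, IsSubwalk, append_assoc]

lemma isXYPath_iff {X Y : Set V} {a b : V} {q : G.Walk a b} :
    IsXYPath G X Y q ↔ q.IsPath ∧ a ∈ X ∧ b ∈ Y ∧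
      (∀ z ∈ q.support, z ∈ X → z = a) ∧ (∀ z ∈ q.support, z ∈ Y → z = b) := by
  simp only [IsXYPath, Set.eq_singleton_iff_unique_mem, walkVerts, Set.mem_inter_iff,
    Set.mem_ofPred_eq, start_mem_support, end_mem_support, true_and, and_imp]
  tauto

/-- A shortest `X`-to-`Y` subwalk of a path is an `X`-`Y` path. -/
lemma exists_isXYPath_isSubwalk {X Y : Set V} {c d : V} {w : G.Walk c d} (hw : w.IsPath)
    (hc : c ∈ X) (hd : d ∈ Y) :
    ∃ (a b : V) (q : G.Walk a b), q.IsSubwalk w ∧ IsXYPath G X Y q := by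
  classical
  have hS : ∃ n, ∃ (a b : V) (q : G.Walk a b), q.IsSubwalk w ∧ a ∈ X ∧ b ∈ Y ∧ q.length = n :=
    ⟨_, c, d, w, isSubwalk_rfl w, hc, hd, rfl⟩
  obtain ⟨a, b, q, hqw, ha, hb, hlen⟩ := Nat.find_spec hS
  have hmin : ∀ (a' b' : V) (q' : G.Walk a' b'), q'.IsSubwalk q → a' ∈ X → b' ∈ Y →
      q.length ≤ q'.length := fun a' b' q' hq' ha' hb' ↦
    hlen ▸ Nat.find_min' hS ⟨a', b', q', hq'.trans hqw, ha', hb', rfl⟩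
  refine ⟨a, b, q, hqw, isXYPath_iff.mpr ⟨isPath_of_isSubwalk hqw hw, ha, hb, ?_, ?_⟩⟩
  · intro z hz hzX
    by_contra hza
    exact (length_dropUntil_lt_length hz hza).not_ge
      (hmin _ _ _ (q.isSubwalk_dropUntil hz) hzX hb)
  · intro z hz hzY
    by_contra hzb
    exact (length_takeUntil_lt_length hz hzb).not_ge
      (hmin _ _ _ (q.isSubwalk_takeUntil hz) ha hzY)

/-- Extending either half of a longest path `P` at `a` by `t` gives a path, so neither half is
shorter than `t`. -/
lemma IsLongestPath.two_mul_length_le [Finite V] {x y a b : V} {P : G.Walk x y}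
    (hP : IsLongestPath G P) (ha : a ∈ P.support) {t : G.Walk a b} (ht : t.IsPath)
    (hPt : ∀ z ∈ t.support, z ∈ P.support → z = a) :
    2 * t.length ≤ P.length := by
  classical
  have hfront : ((P.takeUntil a ha).append t).IsPath :=
    (hP.1.takeUntil ha).append ht fun z hz hzt ↦
      hPt z hzt (P.support_takeUntil_subset_support ha hz)
  have hback : ((P.dropUntil a ha).reverse.append t).IsPath := by
    refine (hP.1.dropUntil ha).reverse.append ht fun z hz hzt ↦ hPt z hzt ?_
    exact P.support_dropUntil_subset_support ha (by simpa using hz)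
  have hsplit := congrArg length (P.take_spec ha)
  have h₁ := hfront.length_le_maxPathLength
  have h₂ := hback.length_le_maxPathLength
  simp only [length_append, length_reverse] at hsplit h₁ h₂
  rw [← hP.2] at h₁ h₂
  omega

lemma IsXYPath.eq_of_isSubwalk_of_forall_not_mem [Finite V] {u v xA yA xB yB a b : V}
    {p : G.Walk u v} {pA : G.Walk xA yA} {pB : G.Walk xB yB} {q : G.Walk a b}
    (hp : IsLongestPath G p) (hA : IsLongestPath G pA) (hB : IsLongestPath G pB)
    (hq : IsXYPath G (walkVerts pA) (walkVerts pB) q) (hqp : q.IsSubwalk p)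
    (hBA : ∀ ⦃c d : V⦄ (w : G.Walk c d), w.IsSubwalk p → c ∈ pB.support → d ∉ pA.support) :
    a = b := by
  classical
  obtain ⟨-, haA, hbB, hqA, hqB⟩ := isXYPath_iff.mp hq
  obtain ⟨r, s, rfl⟩ := hqp
  have hrB : ∀ z ∈ r.support, z ∉ pB.support := fun z hz hzB ↦
    hBA (r.dropUntil z hz)
      ((r.isSubwalk_dropUntil hz).trans ⟨nil, q.append s, by simp [append_assoc]⟩) hzB haA
  have hsA : ∀ z ∈ s.support, z ∉ pA.support := fun z hz hzA ↦
    hBA (s.takeUntil z hz) ((s.isSubwalk_takeUntil hz).trans ⟨r.append q, nil, by simp⟩) hbB hzA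
  have hqs : (q.append s).IsPath := isPath_of_isSubwalk ⟨r, nil, by simp [append_assoc]⟩ hp.1
  have hrq : (r.append q).IsPath := hp.1.of_append_left
  have h₁ := hA.two_mul_length_le haA hqs fun z hz hzA ↦ by
    rcases (mem_support_append_iff _ _).mp hz with hz | hz
    · exact hqA z hz hzA
    · exact absurd hzA (hsA z hz)
  have h₂ := hB.two_mul_length_le hbB hrq.reverse fun z hz hzB ↦ by
    rw [support_reverse, List.mem_reverse, mem_support_append_iff] at hz
    rcases hz with hz | hz
    · exact absurd hzB (hrB z hz)
    · exact hqB z hz hzB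
  have hpL : ((r.append q).append s).length = maxPathLength G := hp.2
  rw [hA.2, ← hpL] at h₁
  rw [hB.2, ← hpL] at h₂
  simp only [length_append, length_reverse] at h₁ h₂
  exact eq_of_length_eq_zero (p := q) (by omega)

/-- A `Y`-`X` subpath of `p` with the endpoints of the `X`-`Y` path `q` would meet `X` only at
`b`, yet it passes through `a ∈ X`. -/
lemma IsXYPath.eq_of_forall_isXYPath_swap [Finite V] {u v xA yA xB yB a b : V}
    {p : G.Walk u v} {pA : G.Walk xA yA} {pB : G.Walk xB yB} {q : G.Walk a b}
    (hp : IsLongestPath G p) (hA : IsLongestPath G pA) (hB : IsLongestPath G pB)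
    (hq : IsXYPath G (walkVerts pA) (walkVerts pB) q) (hqp : q.IsSubwalk p)
    (hends : ∀ ⦃a' b' : V⦄ (q' : G.Walk a' b'), q'.IsSubwalk p →
      IsXYPath G (walkVerts pB) (walkVerts pA) q' → a' = a ∧ b' = b) :
    a = b := by
  by_contra hab
  refine hab (hq.eq_of_isSubwalk_of_forall_not_mem hp hA hB hqp fun c d w hwp hc hd ↦ hab ?_)
  obtain ⟨a', b', q', hq'w, hq'⟩ :=
    exists_isXYPath_isSubwalk (isPath_of_isSubwalk hwp hp.1) (mem_walkVerts.mpr hc)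
      (mem_walkVerts.mpr hd)
  obtain ⟨rfl, rfl⟩ := hends q' (hq'w.trans hwp) hq'
  exact (isXYPath_iff.mp hq').2.2.2.2 a' q'.start_mem_support (isXYPath_iff.mp hq).2.1

lemma exists_mem_of_tCount_eq_one [Finite V] {u v xA yA xB yB : V}
    {p : G.Walk u v} {pA : G.Walk xA yA} {pB : G.Walk xB yB}
    (hp : IsLongestPath G p) (hA : IsLongestPath G pA) (hB : IsLongestPath G pB)
    (ht : tCount G p (walkVerts pA) (walkVerts pB) = 1) :
    ∃ x ∈ p.support, x ∈ pA.support ∧ x ∈ pB.support := by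
  rw [tCount, Nat.card_eq_one_iff_exists] at ht
  obtain ⟨⟨⟨a, b, q⟩, hqp, hq⟩, huniq⟩ := ht
  dsimp only at hqp hq
  rw [isSubpath_iff_isSubwalk] at hqp
  have hends : ∀ ⦃a' b' : V⦄ (q' : G.Walk a' b'), q'.IsSubwalk p →
      IsXYPath G (walkVerts pA) (walkVerts pB) q' ∨ IsXYPath G (walkVerts pB) (walkVerts pA) q' →
      a' = a ∧ b' = b := fun a' b' q' hq'p hq' ↦ by
    have h := congrArg Subtype.val (huniq ⟨⟨a', b', q'⟩, isSubpath_iff_isSubwalk.mpr hq'p, hq'⟩)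
    exact ⟨congrArg Sigma.fst h, congrArg (·.2.1) h⟩
  have hap : a ∈ p.support := hqp.support_subset q.start_mem_support
  rcases hq with hq | hq
  · have hab := hq.eq_of_forall_isXYPath_swap hp hA hB hqp fun _ _ q' h h' ↦ hends q' h (.inr h')
    obtain ⟨-, haA, hbB, -⟩ := isXYPath_iff.mp hq
    exact ⟨a, hap, haA, hab ▸ hbB⟩
  · have hab := hq.eq_of_forall_isXYPath_swap hp hB hA hqp fun _ _ q' h h' ↦ hends q' h (.inl h')
    obtain ⟨-, haB, hbA, -⟩ := isXYPath_iff.mp hq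
    exact ⟨a, hap, hab ▸ hbA, haB⟩

lemma distToSet_eq_zero_of_mem {x : V} {U : Set V} (hx : x ∈ U) : distToSet G x U = 0 :=
  Nat.sInf_eq_zero.mpr (.inl ⟨x, hx, dist_self⟩)

lemma fThree_eq_zero_of_mem {u₁ v₁ u₂ v₂ u₃ v₃ x : V} {p₁ : G.Walk u₁ v₁} {p₂ : G.Walk u₂ v₂}
    {p₃ : G.Walk u₃ v₃} (h₁ : x ∈ p₁.support) (h₂ : x ∈ p₂.support) (h₃ : x ∈ p₃.support) :
    fThree G p₁ p₂ p₃ = 0 := by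
  refine Nat.sInf_eq_zero.mpr (.inl ⟨x, ?_⟩)
  simp only [distToSet_eq_zero_of_mem (mem_walkVerts.mpr h₁),
    distToSet_eq_zero_of_mem (mem_walkVerts.mpr h₂),
    distToSet_eq_zero_of_mem (mem_walkVerts.mpr h₃)]

end

theorem fThree_eq_zero_of_tCount_eq_one_general {V : Type} [Fintype V] (G : SimpleGraph V)
    {u₁ v₁ u₂ v₂ u₃ v₃ : V} (p₁ : G.Walk u₁ v₁) (p₂ : G.Walk u₂ v₂) (p₃ : G.Walk u₃ v₃)
    (h₁ : IsLongestPath G p₁) (h₂ : IsLongestPath G p₂) (h₃ : IsLongestPath G p₃)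
    (ht : tCount G p₁ (walkVerts p₂) (walkVerts p₃) = 1 ∨
          tCount G p₂ (walkVerts p₁) (walkVerts p₃) = 1 ∨
          tCount G p₃ (walkVerts p₁) (walkVerts p₂) = 1) :
    fThree G p₁ p₂ p₃ = 0 := by
  obtain ⟨x, hx₁, hx₂, hx₃⟩ : ∃ x ∈ p₁.support, x ∈ p₂.support ∧ x ∈ p₃.support := by
    rcases ht with ht | ht | ht
    · exact exists_mem_of_tCount_eq_one h₁ h₂ h₃ ht
    · obtain ⟨x, hx₂, hx₁, hx₃⟩ := exists_mem_of_tCount_eq_one h₂ h₁ h₃ ht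
      exact ⟨x, hx₁, hx₂, hx₃⟩
    · obtain ⟨x, hx₃, hx₁, hx₂⟩ := exists_mem_of_tCount_eq_one h₃ h₁ h₂ ht
      exact ⟨x, hx₁, hx₂, hx₃⟩
  exact fThree_eq_zero_of_mem hx₁ hx₂ hx₃

/-- If some path `P` in a set `P` of three longest paths of a finite connected graph
satisfies `t_P(P) = 1`, then `f(G, P) = 0`. -/
theorem fThree_eq_zero_of_tCount_eq_one {V : Type} [Fintype V] (G : SimpleGraph V)
    (hG : G.Connected)
    {u₁ v₁ u₂ v₂ u₃ v₃ : V} (p₁ : G.Walk u₁ v₁) (p₂ : G.Walk u₂ v₂) (p₃ : G.Walk u₃ v₃)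
    (h₁ : IsLongestPath G p₁) (h₂ : IsLongestPath G p₂) (h₃ : IsLongestPath G p₃)
    (hne₁₂ : pathSigma G p₁ ≠ pathSigma G p₂)
    (hne₁₃ : pathSigma G p₁ ≠ pathSigma G p₃)
    (hne₂₃ : pathSigma G p₂ ≠ pathSigma G p₃)
    (ht : tCount G p₁ (walkVerts p₂) (walkVerts p₃) = 1 ∨
          tCount G p₂ (walkVerts p₁) (walkVerts p₃) = 1 ∨
          tCount G p₃ (walkVerts p₁) (walkVerts p₂) = 1) :
    fThree G p₁ p₂ p₃ = 0 :=
  fThree_eq_zero_of_tCount_eq_one_general G p₁ p₂ p₃ h₁ h₂ h₃ ht
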